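/- arXiv:1301.4666 — 2 statements merged into one kernel-verified Lean document; each statement's English description precedes it below -/
import Mathlib

section
/- With the decomposition y = Σᵢ(λᵢ - Δᵢ)vᵢ + (ΣᵢΔᵢ)z minimizing ΣΔᵢ, if ‖x - y‖ ≤ r then ΣᵢΔᵢ ≤ (√n·ψ/ξ)·r, where ψ = ψ(P) bounds the spectral norm of any submatrix of linearly independent rows of A₂ and ξ = ξ(P) = min over vertices v and non-tight constraints j of b₂(j) - A₂(j)v. -/
/-!
Let `S` be a maximal linearly independent set of rows of `A₂` among the inequalities tight
at `z`. If `Δᵢ > 0`, then `vᵢ` is slack on some row of `S`: otherwise `vᵢ` is tight wherever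
`z` is, so `z` can be pushed a little away from `vᵢ` inside `P`, and moving part of the mass
of `z` onto `vᵢ` would lower `∑ Δᵢ`. As `y - x = ∑ᵢ Δᵢ (z - vᵢ)` and `z` is tight on `S`,
summing slacks over `S` gives `ξ ∑ Δᵢ ≤ ∑_{j ∈ S} A₂(j)(y - x) ≤ √|S| ψ ‖y - x‖`, and
`|S| ≤ n`.
-/

open Finset Filter Topology

section Polyhedron

variable {E : Type*} [AddCommGroup E] [Module ℝ E] {η κ : Type*}

def polyhedron (f : η → Module.Dual ℝ E) (b : η → ℝ) (g : κ → Module.Dual ℝ E) (c : κ → ℝ) :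
    Set E :=
  {x | (∀ i, f i x = b i) ∧ ∀ j, g j x ≤ c j}

variable {f : η → Module.Dual ℝ E} {b : η → ℝ} {g : κ → Module.Dual ℝ E} {c : κ → ℝ}

theorem eventually_add_smul_sub_mem_polyhedron [Finite κ] {z u : E}
    (hz : z ∈ polyhedron f b g c) (hu : u ∈ polyhedron f b g c)
    (htight : ∀ j, g j z = c j → g j u = c j) :
    ∀ᶠ t in 𝓝 (0 : ℝ), z + t • (z - u) ∈ polyhedron f b g c := by
  have hval (φ : Module.Dual ℝ E) (t : ℝ) : φ (z + t • (z - u)) = φ z + t * (φ z - φ u) := by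
    simp only [map_add, map_smul, map_sub, smul_eq_mul]
  have hineq (j : κ) : ∀ᶠ t in 𝓝 (0 : ℝ), g j (z + t • (z - u)) ≤ c j := by
    rcases (hz.2 j).lt_or_eq with hlt | heq
    · have hlim : Tendsto (fun t : ℝ => g j z + t * (g j z - g j u)) (𝓝 0) (𝓝 (g j z)) :=
        (continuous_const.add (continuous_id.mul continuous_const)).tendsto' _ _ (by simp)
      filter_upwards [hlim.eventually (eventually_le_nhds hlt)] with t ht
      rwa [hval]
    · exact Eventually.of_forall fun t => by simp [hval, heq, htight j heq]
  filter_upwards [eventually_all.2 hineq] with t ht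
  exact ⟨fun i => by simp [hval, hz.1 i, hu.1 i], ht⟩

variable {ι : Type*} [Fintype ι] {v : ι → E} {lam Δ : ι → ℝ} {y z : E}

theorem sub_eq_sum_smul_sub {x : E} (hx : x = ∑ i, lam i • v i)
    (hy : y = ∑ i, (lam i - Δ i) • v i + (∑ i, Δ i) • z) :
    y - x = ∑ i, Δ i • (z - v i) := by
  simp only [hx, hy, sub_smul, smul_sub, sum_sub_distrib, sum_smul]
  abel

theorem eventually_add_smul_sub_notMem_of_minimal {P : Set E}
    (hΔ : ∀ i, Δ i ∈ Set.Icc 0 (lam i))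
    (hdecomp : y = ∑ i, (lam i - Δ i) • v i + (∑ i, Δ i) • z)
    (hmin : ∀ (Δ' : ι → ℝ) (z' : E), z' ∈ P → (∀ i, Δ' i ∈ Set.Icc 0 (lam i)) →
      y = ∑ i, (lam i - Δ' i) • v i + (∑ i, Δ' i) • z' → ∑ i, Δ i ≤ ∑ i, Δ' i)
    {i₀ : ι} (hi₀ : 0 < Δ i₀) :
    ∀ᶠ t in 𝓝[>] (0 : ℝ), z + t • (z - v i₀) ∉ P := by
  classical
  set Λ := ∑ i, Δ i
  have hΛ : Δ i₀ ≤ Λ := single_le_sum (fun i _ => (hΔ i).1) (mem_univ i₀)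
  have hΛpos : 0 < Λ := hi₀.trans_le hΛ
  filter_upwards [Ioo_mem_nhdsGT (div_pos hi₀ hΛpos)] with t ⟨ht₀, ht⟩ hmem
  -- `z` is a convex combination of `z + t • (z - v i₀)` and `v i₀`; shifting its share `ε` of
  -- `v i₀` into the first sum lowers the total mass by `ε`.
  set ε := Λ * t / (1 + t)
  have hε : 0 < ε := by positivity
  have hεΔ : ε ≤ Δ i₀ := by
    calc ε ≤ Λ * t := div_le_self (by positivity) (by linarith)
      _ ≤ Δ i₀ := by rw [lt_div_iff₀ hΛpos] at ht; linarith
  have hmass : (Λ - ε) * (1 + t) = Λ ∧ (Λ - ε) * t = ε := by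
    constructor <;> · simp only [ε]; field_simp; ring
  set Δ' : ι → ℝ := Δ - Pi.single i₀ ε
  have hsum : ∑ i, Δ' i = Λ - ε := by
    simp [Δ', sum_sub_distrib, Λ]
  have hIcc : ∀ i, Δ' i ∈ Set.Icc 0 (lam i) := by
    intro i
    rcases eq_or_ne i i₀ with rfl | hi
    · simp only [Δ', Pi.sub_apply, Pi.single_eq_same, Set.mem_Icc]
      constructor <;> linarith [(hΔ i).2]
    · simpa [Δ', hi] using hΔ i
  have hdecomp' : y = ∑ i, (lam i - Δ' i) • v i
      + (∑ i, Δ' i) • (z + t • (z - v i₀)) := by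
    have hshift : ∑ i, (lam i - Δ' i) • v i
        = ∑ i, (lam i - Δ i) • v i + ε • v i₀ := by
      have hterm (i : ι) :
          (lam i - Δ' i) • v i = (lam i - Δ i) • v i + (Pi.single i₀ ε : ι → ℝ) i • v i := by
        simp only [Δ', Pi.sub_apply]
        module
      simp [hterm, sum_add_distrib, Pi.single_apply, ite_smul]
    have hz' : (Λ - ε) • (z + t • (z - v i₀))
        = ((Λ - ε) * (1 + t)) • z - ((Λ - ε) * t) • v i₀ := by
      module
    rw [hshift, hsum, hz', hmass.1, hmass.2, hdecomp]
    abel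
  have hle := hmin _ _ hmem hIcc hdecomp'
  rw [hsum] at hle
  linarith

theorem exists_mem_lt_of_minimal_decomposition [Finite κ] (hv : ∀ i, v i ∈ polyhedron f b g c)
    (hz : z ∈ polyhedron f b g c) (hΔ : ∀ i, Δ i ∈ Set.Icc 0 (lam i))
    (hdecomp : y = ∑ i, (lam i - Δ i) • v i + (∑ i, Δ i) • z)
    (hmin : ∀ (Δ' : ι → ℝ) (z' : E), z' ∈ polyhedron f b g c →
      (∀ i, Δ' i ∈ Set.Icc 0 (lam i)) →
      y = ∑ i, (lam i - Δ' i) • v i + (∑ i, Δ' i) • z' → ∑ i, Δ i ≤ ∑ i, Δ' i)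
    {S : Set κ} (hS : ∀ j ∈ S, g j z = c j)
    (hspan : ∀ j, g j z = c j → g j ∈ Submodule.span ℝ (g '' S))
    {i : ι} (hi : 0 < Δ i) : ∃ j ∈ S, g j (v i) < c j := by
  by_contra! hge
  have htight (j : κ) (hj : g j z = c j) : g j (v i) = c j := by
    have hker : Submodule.span ℝ (g '' S) ≤ LinearMap.ker (Module.Dual.eval ℝ E (z - v i)) := by
      refine Submodule.span_le.2 ?_
      rintro _ ⟨s, hs, rfl⟩
      have hvs : g s (v i) = c s := le_antisymm ((hv i).2 s) (hge s hs)
      simp [hS s hs, hvs]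
    have hj0 := hker (hspan j hj)
    simp only [LinearMap.mem_ker, map_sub, LinearMap.sub_apply, Module.Dual.eval_apply] at hj0
    linarith
  obtain ⟨t, hmem, hnotMem⟩ :=
    (((eventually_add_smul_sub_mem_polyhedron hz (hv i) htight).filter_mono
      nhdsWithin_le_nhds).and (eventually_add_smul_sub_notMem_of_minimal hΔ hdecomp hmin hi)).exists
  exact hnotMem hmem

theorem exists_linearIndependent_mul_sum_le_sum [Fintype κ] (hv : ∀ i, v i ∈ polyhedron f b g c)
    {ξ : ℝ} (hslack : ∀ i j, g j (v i) < c j → ξ ≤ c j - g j (v i))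
    {x : E} (hx : x = ∑ i, lam i • v i)
    (hz : z ∈ polyhedron f b g c) (hΔ : ∀ i, Δ i ∈ Set.Icc 0 (lam i))
    (hdecomp : y = ∑ i, (lam i - Δ i) • v i + (∑ i, Δ i) • z)
    (hmin : ∀ (Δ' : ι → ℝ) (z' : E), z' ∈ polyhedron f b g c →
      (∀ i, Δ' i ∈ Set.Icc 0 (lam i)) →
      y = ∑ i, (lam i - Δ' i) • v i + (∑ i, Δ' i) • z' → ∑ i, Δ i ≤ ∑ i, Δ' i) :
    ∃ S : Finset κ, LinearIndependent ℝ (fun j : S => g j) ∧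
      ξ * ∑ i, Δ i ≤ ∑ j ∈ S, g j (y - x) := by
  obtain ⟨S, hST, -, hspan, hind⟩ := exists_linearIndepOn_extension (K := ℝ) (v := g)
    (t := {j | g j z = c j}) (linearIndepOn_empty ℝ g) (Set.empty_subset _)
  lift S to Finset κ using S.toFinite
  have hmass_le (i : ι) : ξ * Δ i ≤ ∑ j ∈ S, Δ i * (c j - g j (v i)) := by
    rcases (hΔ i).1.eq_or_lt with h0 | hpos
    · simp [← h0]
    obtain ⟨j, hjS, hj⟩ := exists_mem_lt_of_minimal_decomposition hv hz hΔ hdecomp hmin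
      (fun j hj => hST hj) (fun j hj => hspan ⟨j, hj, rfl⟩) hpos
    calc ξ * Δ i ≤ Δ i * (c j - g j (v i)) := by nlinarith [hslack i j hj]
      _ ≤ ∑ j ∈ S, Δ i * (c j - g j (v i)) :=
        single_le_sum (fun j _ => mul_nonneg hpos.le (sub_nonneg.2 ((hv i).2 j))) hjS
  refine ⟨S, hind, ?_⟩
  calc ξ * ∑ i, Δ i ≤ ∑ i, ∑ j ∈ S, Δ i * (c j - g j (v i)) := by
        rw [mul_sum]; exact sum_le_sum fun i _ => hmass_le i
    _ = ∑ j ∈ S, g j (y - x) := by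
        rw [sum_comm, sub_eq_sum_smul_sub hx hdecomp]
        refine sum_congr rfl fun j hj => ?_
        have hzj : g j z = c j := hST hj
        simp [hzj]

end Polyhedron

def dotProductDual (n : ℕ) : (Fin n → ℝ) →ₗ[ℝ] Module.Dual ℝ (EuclideanSpace ℝ (Fin n)) :=
  (dotProductBilin ℝ ℝ).compl₂ (WithLp.linearEquiv 2 ℝ (Fin n → ℝ)).toLinearMap

theorem sum_le_sqrt_mul_sqrt_sum_sq_of_card_le {κ : Type*} {s : Finset κ} {N : ℕ} (hs : #s ≤ N)
    (a : κ → ℝ) : ∑ j ∈ s, a j ≤ √N * √(∑ j ∈ s, a j ^ 2) :=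
  calc ∑ j ∈ s, a j = ∑ j ∈ s, 1 * a j := by simp
    _ ≤ √(∑ j ∈ s, 1 ^ 2) * √(∑ j ∈ s, a j ^ 2) := Real.sum_mul_le_sqrt_mul_sqrt s _ a
    _ ≤ √N * √(∑ j ∈ s, a j ^ 2) := by gcongr; simpa using hs

theorem stmt_7_general {n m₁ m : ℕ} {k : ℕ}
    (A₁ : Fin m₁ → Fin n → ℝ) (b₁ : Fin m₁ → ℝ)
    (A₂ : Fin m → Fin n → ℝ) (b₂ : Fin m → ℝ)
    (P : Set (EuclideanSpace ℝ (Fin n)))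
    (hP : P = {x | (∀ i, ∑ l, A₁ i l * x l = b₁ i) ∧ (∀ j, ∑ l, A₂ j l * x l ≤ b₂ j)})
    (ψ ξ r : ℝ) (hψ : 0 < ψ) (hξ : 0 < ξ)
    -- ψ bounds the spectral norm of any submatrix of linearly independent rows of A₂:
    (hψspec : ∀ S : Finset (Fin m), LinearIndependent ℝ (fun j : S => A₂ j) →
      ∀ w : EuclideanSpace ℝ (Fin n),
        Real.sqrt (∑ j ∈ S, (∑ l, A₂ j l * w l) ^ 2) ≤ ψ * ‖w‖)
    -- ξ lower-bounds the slack of non-tight constraints at vertices: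
    (hξslack : ∀ u ∈ Set.extremePoints ℝ P, ∀ j,
      ∑ l, A₂ j l * u l < b₂ j → ξ ≤ b₂ j - ∑ l, A₂ j l * u l)
    (v : Fin k → EuclideanSpace ℝ (Fin n)) (hv : ∀ i, v i ∈ Set.extremePoints ℝ P)
    (lam : Fin k → ℝ)
    (x : EuclideanSpace ℝ (Fin n)) (hx : x = ∑ i, lam i • v i)
    (y : EuclideanSpace ℝ (Fin n)) (hxy : ‖x - y‖ ≤ r)
    (Δ : Fin k → ℝ) (z : EuclideanSpace ℝ (Fin n)) (hzP : z ∈ P)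
    (hΔ : ∀ i, Δ i ∈ Set.Icc 0 (lam i))
    (hdecomp : y = ∑ i, (lam i - Δ i) • v i + (∑ i, Δ i) • z)
    (hmin : ∀ (Δ' : Fin k → ℝ) (z' : EuclideanSpace ℝ (Fin n)), z' ∈ P →
      (∀ i, Δ' i ∈ Set.Icc 0 (lam i)) →
      y = ∑ i, (lam i - Δ' i) • v i + (∑ i, Δ' i) • z' →
      ∑ i, Δ i ≤ ∑ i, Δ' i) :
    ∑ i, Δ i ≤ (Real.sqrt n * ψ / ξ) * r := by
  set R := dotProductDual n
  have hPpoly : P = polyhedron (fun i => R (A₁ i)) b₁ (fun j => R (A₂ j)) b₂ := hP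
  obtain ⟨S, hind, hkey⟩ := exists_linearIndependent_mul_sum_le_sum
    (fun i => hPpoly ▸ extremePoints_subset (hv i)) (fun i j => hξslack (v i) (hv i) j) hx
    (hPpoly ▸ hzP) hΔ hdecomp (hPpoly ▸ hmin)
  have hrows : LinearIndependent ℝ (fun j : S => A₂ j) := hind.of_comp R
  have hcard : #S ≤ n := by simpa using hrows.fintype_card_le_finrank
  rw [div_mul_eq_mul_div, le_div_iff₀ hξ, mul_comm]
  calc ξ * ∑ i, Δ i ≤ ∑ j ∈ S, R (A₂ j) (y - x) := hkey
    _ ≤ √n * √(∑ j ∈ S, R (A₂ j) (y - x) ^ 2) := sum_le_sqrt_mul_sqrt_sum_sq_of_card_le hcard _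
    _ ≤ √n * (ψ * ‖y - x‖) := by gcongr; exact hψspec S hrows (y - x)
    _ ≤ √n * ψ * r := by rw [norm_sub_rev, ← mul_assoc]; gcongr

/-- Mass bound for minimal decompositions: with `y = Σᵢ(λᵢ - Δᵢ)vᵢ + (ΣᵢΔᵢ)z` a
minimal-mass decomposition as in the local linear oracle construction, if `‖x - y‖ ≤ r`
then `Σᵢ Δᵢ ≤ (√n ψ / ξ) r`, where `ψ` bounds the spectral norm of any submatrix of
linearly independent rows of `A₂`, and `ξ ≤ b₂(j) - A₂(j)v` for every vertex `v` and
non-tight constraint `j`. -/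
theorem stmt_7 {n m₁ m : ℕ} {k : ℕ}
    (A₁ : Fin m₁ → Fin n → ℝ) (b₁ : Fin m₁ → ℝ)
    (A₂ : Fin m → Fin n → ℝ) (b₂ : Fin m → ℝ)
    (P : Set (EuclideanSpace ℝ (Fin n)))
    (hP : P = {x | (∀ i, ∑ l, A₁ i l * x l = b₁ i) ∧ (∀ j, ∑ l, A₂ j l * x l ≤ b₂ j)})
    (hbdd : Bornology.IsBounded P)
    (ψ ξ r : ℝ) (hψ : 0 < ψ) (hξ : 0 < ξ) (hr : 0 < r)
    -- ψ bounds the spectral norm of any submatrix of linearly independent rows of A₂: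
    (hψspec : ∀ S : Finset (Fin m), LinearIndependent ℝ (fun j : S => A₂ j) →
      ∀ w : EuclideanSpace ℝ (Fin n),
        Real.sqrt (∑ j ∈ S, (∑ l, A₂ j l * w l) ^ 2) ≤ ψ * ‖w‖)
    -- ξ lower-bounds the slack of non-tight constraints at vertices:
    (hξslack : ∀ u ∈ Set.extremePoints ℝ P, ∀ j,
      ∑ l, A₂ j l * u l < b₂ j → ξ ≤ b₂ j - ∑ l, A₂ j l * u l)
    (v : Fin k → EuclideanSpace ℝ (Fin n)) (hv : ∀ i, v i ∈ Set.extremePoints ℝ P)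
    (lam : Fin k → ℝ) (hlam : ∀ i, 0 < lam i) (hlamsum : ∑ i, lam i = 1)
    (x : EuclideanSpace ℝ (Fin n)) (hx : x = ∑ i, lam i • v i)
    (y : EuclideanSpace ℝ (Fin n)) (hy : y ∈ P) (hxy : ‖x - y‖ ≤ r)
    (Δ : Fin k → ℝ) (z : EuclideanSpace ℝ (Fin n)) (hzP : z ∈ P)
    (hΔ : ∀ i, Δ i ∈ Set.Icc 0 (lam i))
    (hdecomp : y = ∑ i, (lam i - Δ i) • v i + (∑ i, Δ i) • z)
    (hmin : ∀ (Δ' : Fin k → ℝ) (z' : EuclideanSpace ℝ (Fin n)), z' ∈ P →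
      (∀ i, Δ' i ∈ Set.Icc 0 (lam i)) →
      y = ∑ i, (lam i - Δ' i) • v i + (∑ i, Δ' i) • z' →
      ∑ i, Δ i ≤ ∑ i, Δ' i) :
    ∑ i, Δ i ≤ (Real.sqrt n * ψ / ξ) * r :=
  stmt_7_general A₁ b₁ A₂ b₂ P hP ψ ξ r hψ hξ hψspec hξslack v hv lam x hx y hxy Δ z hzP hΔ hdecomp
    hmin
end

section
/- The solution to min{Σᵢ(xᵢ - 1)² : x ∈ Δₙ, ‖x‖₀ ≤ t} is x̃ with x̃ᵢ = 1/t for i ≤ t and 0 otherwise, with optimal value n - 2 + 1/t. -/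
/-!
Expanding the square, `∑ (xᵢ - 1)² = ∑ xᵢ² - 2 ∑ xᵢ + n`, so on the simplex it suffices to
minimise `∑ xᵢ²`. By Cauchy–Schwarz on the support `S` of `x`,
`1 = (∑_{i ∈ S} xᵢ)² ≤ #S · ∑ xᵢ² ≤ t · ∑ xᵢ²`, and the uniform vector on `t` coordinates
attains `∑ xᵢ² = 1/t`.
-/

open Finset

section

variable {ι : Type*} [Fintype ι]

theorem sum_sub_one_sq (x : ι → ℝ) :
    ∑ i, (x i - 1) ^ 2 = ∑ i, x i ^ 2 - 2 * ∑ i, x i + Fintype.card ι := by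
  simp only [sub_sq, mul_one, one_pow, sum_add_distrib, sum_sub_distrib, ← mul_sum,
    sum_const, card_univ, nsmul_eq_mul]

theorem sq_sum_le_card_support_mul_sum_sq (x : ι → ℝ) :
    (∑ i, x i) ^ 2 ≤ #{i | x i ≠ 0} * ∑ i, x i ^ 2 := by
  calc (∑ i, x i) ^ 2 = (∑ i ∈ {i | x i ≠ 0}, x i) ^ 2 := by rw [sum_filter_ne_zero]
    _ ≤ #{i | x i ≠ 0} * ∑ i ∈ {i | x i ≠ 0}, x i ^ 2 := sq_sum_le_card_mul_sum_sq
    _ ≤ #{i | x i ≠ 0} * ∑ i, x i ^ 2 :=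
      mul_le_mul_of_nonneg_left (sum_le_univ_sum_of_nonneg fun i => sq_nonneg (x i))
        (Nat.cast_nonneg _)

theorem inv_le_sum_sq_of_card_support_le {x : ι → ℝ} (hx : ∑ i, x i = 1) {t : ℕ}
    (hsupp : #{i | x i ≠ 0} ≤ t) : (t : ℝ)⁻¹ ≤ ∑ i, x i ^ 2 := by
  rcases t.eq_zero_or_pos with rfl | ht
  · simpa using sum_nonneg fun i _ => sq_nonneg (x i)
  have key : 1 ≤ (t : ℝ) * ∑ i, x i ^ 2 := calc
    1 = (∑ i, x i) ^ 2 := by rw [hx, one_pow]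
    _ ≤ #{i | x i ≠ 0} * ∑ i, x i ^ 2 := sq_sum_le_card_support_mul_sum_sq x
    _ ≤ t * ∑ i, x i ^ 2 := by gcongr
  rwa [inv_le_iff_one_le_mul₀' (by exact_mod_cast ht)]

variable (p : ι → Prop) [DecidablePred p] (c : ℝ)

theorem sum_ite_const_zero : ∑ i, (if p i then c else 0) = #{i | p i} * c := by
  rw [← sum_filter, sum_const, nsmul_eq_mul]

theorem sum_ite_const_zero_sq :
    ∑ i, (if p i then c else 0) ^ 2 = #{i | p i} * c ^ 2 := by
  simp only [ite_pow, zero_pow two_ne_zero, sum_ite_const_zero]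

theorem card_support_ite_const_zero_le [DecidablePred fun i => (if p i then c else 0) ≠ 0] :
    #{i | (if p i then c else 0) ≠ 0} ≤ #{i | p i} :=
  card_le_card fun i => by simp only [mem_filter, mem_univ, true_and]; split_ifs <;> simp_all

end

open Classical in
/-- The sparse minimization problem `min { Σᵢ (xᵢ - 1)² : x ∈ Δₙ, ‖x‖₀ ≤ t }` is solved by
`x̃` with `x̃ᵢ = 1/t` for `i < t` and `0` otherwise, with optimal value `n - 2 + 1/t`. -/
theorem stmt_19 (n t : ℕ) (ht : 1 ≤ t) (htn : t ≤ n)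
    (simplex : Set (Fin n → ℝ))
    (hsimplex : simplex = {x : Fin n → ℝ | (∀ i, 0 ≤ x i) ∧ ∑ i, x i = 1})
    (xt : Fin n → ℝ) (hxt : ∀ i : Fin n, xt i = if (i : ℕ) < t then (t : ℝ)⁻¹ else 0) :
    xt ∈ simplex ∧
    (Finset.univ.filter fun i => xt i ≠ 0).card ≤ t ∧
    ∑ i, (xt i - 1) ^ 2 = (n : ℝ) - 2 + (t : ℝ)⁻¹ ∧
    ∀ x ∈ simplex, (Finset.univ.filter fun i => x i ≠ 0).card ≤ t →
      (n : ℝ) - 2 + (t : ℝ)⁻¹ ≤ ∑ i, (x i - 1) ^ 2 := by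
  subst hsimplex
  obtain rfl : xt = fun i : Fin n => if (i : ℕ) < t then (t : ℝ)⁻¹ else 0 := funext hxt
  beta_reduce
  have htR : (t : ℝ) ≠ 0 := by positivity
  have hcard : #{i : Fin n | (i : ℕ) < t} = t := by
    rw [Fin.card_filter_val_lt, min_eq_right htn]
  have hsum : ∑ i : Fin n, (if (i : ℕ) < t then (t : ℝ)⁻¹ else 0) = 1 := by
    rw [sum_ite_const_zero, hcard, mul_inv_cancel₀ htR]
  refine ⟨⟨fun i => by positivity, hsum⟩, ?_, ?_, fun x ⟨_, hx⟩ hsupp => ?_⟩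
  · exact (card_support_ite_const_zero_le (fun i : Fin n => (i : ℕ) < t) _).trans_eq hcard
  · rw [sum_sub_one_sq, sum_ite_const_zero_sq, hsum, hcard, Fintype.card_fin]
    field_simp
    ring
  · rw [sum_sub_one_sq, hx, Fintype.card_fin]
    linarith [inv_le_sum_sq_of_card_support_le hx hsupp]
end
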